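/- Let F be an infinite field (or |F| > d·(K−1)), let ω₁,…,ω_K ∈ F be distinct, and let α₁,…,α_N ∈ F be distinct points with N ≥ d(K−1)+1. For any polynomial f of degree d and any messages X₁,…,X_K ∈ F, let q be the Lagrange polynomial with q(ω_k) = X_k, and let y_n = f(q(α_n)). Then from (y₁,…,y_N) one can recover f(X_k) for all k; i.e., the polynomial f∘q of degree ≤ d(K−1) is uniquely determined by the N ≥ d(K−1)+1 evaluations, and f(X_k) = (f∘q)(ω_k). -/
import Mathlib


open Polynomial Finset

/-- Correctness of Lagrange coded computing without adversaries: any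
polynomial of degree at most `d(K-1)` matching the worker outputs
`y_n = f(q(α_n))` at `N ≥ d(K-1)+1` distinct points must equal `f ∘ q`, and in
particular recovers `f(X_k) = (f ∘ q)(ω_k)` for every shard `k`. -/
theorem lcc_recovery {F : Type*} [Field F] {K N d : ℕ} (hK : 0 < K)
    (hN : d * (K - 1) + 1 ≤ N)
    (ω : Fin K → F) (hω : Function.Injective ω)
    (α : Fin N → F) (hα : Function.Injective α)
    (f : F[X]) (hf : f.natDegree ≤ d) (X : Fin K → F)
    (q : F[X]) (hq : q = Lagrange.interpolate Finset.univ ω X)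
    (y : Fin N → F) (hy : ∀ n, y n = f.eval (q.eval (α n)))
    (p : F[X]) (hp : p.natDegree ≤ d * (K - 1))
    (hpy : ∀ n, p.eval (α n) = y n) :
    p = f.comp q ∧ ∀ k : Fin K, p.eval (ω k) = f.eval (X k) := by
  have hqdeg : q.natDegree ≤ K - 1 := by
    rcases eq_or_ne q 0 with h | h
    · simp [h]
    · have : q.degree < (Finset.univ : Finset (Fin K)).card := by
        rw [hq]; exact Lagrange.degree_interpolate_lt _ (Function.Injective.injOn hω)
      rw [Finset.card_univ, Fintype.card_fin] at this
      have := (natDegree_lt_iff_degree_lt h).mpr this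
      omega
  have hcomp : (f.comp q).natDegree ≤ d * (K - 1) :=
    le_trans (natDegree_comp_le) (Nat.mul_le_mul hf hqdeg)
  have hlt : ∀ r : F[X], r.natDegree ≤ d * (K - 1) →
      r.degree < ((Finset.univ : Finset (Fin N)).card : ℕ) := by
    intro r hr
    rw [Finset.card_univ, Fintype.card_fin]
    calc r.degree ≤ (r.natDegree : WithBot ℕ) := degree_le_natDegree
      _ < (N : WithBot ℕ) := by exact_mod_cast lt_of_le_of_lt hr (by omega)
  have hmain : p = f.comp q := by
    apply Polynomial.eq_of_degrees_lt_of_eval_index_eq (v := α) (s := (Finset.univ : Finset (Fin N)))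
      (Function.Injective.injOn hα) (hlt p hp) (hlt _ hcomp)
    intro n _
    rw [hpy n, hy n, eval_comp]
  refine ⟨hmain, fun k => ?_⟩
  rw [hmain, eval_comp, hq,
    Lagrange.eval_interpolate_at_node X (Function.Injective.injOn hω) (Finset.mem_univ k)]
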